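/- Fix γ ∈ (0,2), an integer m ≥ 1 and T > 0. For every G ∈ 𝓢 there exists C > 0 such that for all integers n ≥ 1 and all η ∈ Ω, sup_{s∈[0,T]} (n^γ / (4 n²)) Σ_{x,y∈ℤ} ( G_s(y/n) − G_s(x/n) )² p(x−y) c^{(m)}_{x,y}(η) ( η(x) − η(y) )² ≤ C · max{ n^{γ−2}, n^{−1} }. -/

import Mathlib

set_option maxHeartbeats 1000000


open MeasureTheory Filter

/-- The long-range transition probability `p(z) = c_γ |z|^{-1-γ}` for `z ≠ 0`, `p(0)=0`. -/
noncomputable def transP (cγ γ : ℝ) (z : ℤ) : ℝ :=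
  if z = 0 then 0 else cγ * |(z : ℝ)| ^ (-(1 + γ))

/-- The test-function space `𝓢`: `G(t,u) = ∑_{j=0}^k t^j G_j(u)` with each `G_j ∈ C_c^∞(ℝ)`. -/
def IsTestFun (G : ℝ → ℝ → ℝ) : Prop :=
  ∃ (k : ℕ) (Gj : ℕ → ℝ → ℝ),
    (∀ j, ContDiff ℝ (⊤ : ℕ∞) (Gj j) ∧ HasCompactSupport (Gj j)) ∧
    ∀ t u, G t u = ∑ j ∈ Finset.range (k + 1), t ^ j * Gj j u

/-- The sites `a_{j,x,y}` (for `j ∈ {1, …, 4(m-1)}`). -/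
def aIdx (m : ℕ) (x y : ℤ) (j : ℕ) : ℤ :=
  if j ≤ m - 1 then x - ((m : ℤ) - (j : ℤ))
  else if j ≤ 2 * (m - 1) then y + (j : ℤ) - ((m : ℤ) - 1)
  else if j ≤ 3 * (m - 1) then y - (3 * (m : ℤ) - 2 - (j : ℤ))
  else x + (j : ℤ) - 3 * ((m : ℤ) - 1)

/-- `S^{(m)}_{x,y}(η) = c^{(m,dif)}_{x,y}(η) + c^{(m,dif)}_{y,x}(η)`. -/
noncomputable def Srate (m : ℕ) (x y : ℤ) (η : ℤ → ℝ) : ℝ :=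
  ∑ j ∈ Finset.Icc 1 m,
    (∏ i ∈ Finset.range (m - 1), η (aIdx m x y (i + j)) +
      ∏ i ∈ Finset.range (m - 1), η (aIdx m x y (i + j + 2 * (m - 1))))

/-- The jump rates: `c^{(1)}_{x,y}(η) = 2` and, for `m ≥ 2`,
`c^{(m)}_{x,y}(η) = S^{(m)}_{x,y}(η) + 1_{m ≥ 3} 1_{|x-y|=1}`. -/
noncomputable def crate (m : ℕ) (x y : ℤ) (η : ℤ → ℝ) : ℝ :=
  if m = 1 then 2
  else Srate m x y η + (if 3 ≤ m ∧ |x - y| = 1 then 1 else 0)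

/-- tail sum of z^{-(1+γ)} over integers > n -/
lemma tail_sum (γ : ℝ) (hγ : 0 < γ) (n : ℕ) (hn : 1 ≤ n) (W : Finset ℤ)
    (hW : ∀ z ∈ W, (n : ℤ) < z) :
    ∑ z ∈ W, ((z : ℝ)) ^ (-(1 + γ)) ≤ (n : ℝ) ^ (-γ) / γ := by
  have hn0 : (0:ℝ) < n := by exact_mod_cast hn
  set a : ℕ := W.sup (fun z => z.toNat) with ha
  have hsub : W ⊆ Finset.Ioc (n : ℤ) ((n : ℤ) + a) := by
    intro z hz
    have h1 := hW z hz
    have h2 : z.toNat ≤ a := Finset.le_sup (f := fun z : ℤ => z.toNat) hz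
    have h3 : z ≤ z.toNat := Int.self_le_toNat z
    simp only [Finset.mem_Ioc]
    omega
  have hstep : ∑ z ∈ W, ((z : ℝ)) ^ (-(1 + γ)) ≤
      ∑ z ∈ Finset.Ioc (n : ℤ) ((n : ℤ) + a), ((z : ℝ)) ^ (-(1 + γ)) := by
    apply Finset.sum_le_sum_of_subset_of_nonneg hsub
    intro z hz _
    apply Real.rpow_nonneg
    have : (n : ℤ) < z := (Finset.mem_Ioc.1 hz).1
    have : (0:ℤ) < z := by omega
    exact_mod_cast this.le
  have himg : Finset.Ioc (n : ℤ) ((n : ℤ) + a) = (Finset.range a).image (fun i : ℕ => (n : ℤ) + 1 + i) := by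
    ext z
    simp only [Finset.mem_Ioc, Finset.mem_image, Finset.mem_range]
    constructor
    · intro ⟨h1, h2⟩; exact ⟨(z - n - 1).toNat, by omega, by omega⟩
    · rintro ⟨i, hi, rfl⟩; omega
  rw [himg, Finset.sum_image (by intro i _ j _ h; beta_reduce at h; omega)] at hstep
  have hanti : AntitoneOn (fun x : ℝ => x ^ (-(1 + γ))) (Set.Icc (n : ℝ) ((n:ℝ) + a)) := by
    intro x hx y hy hxy
    exact Real.rpow_le_rpow_of_nonpos (lt_of_lt_of_le hn0 hx.1) hxy (by linarith)
  have hint := hanti.sum_le_integral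
  have hival : ∫ x in (n:ℝ)..((n:ℝ) + a), x ^ (-(1 + γ)) =
      (((n:ℝ) + a) ^ (-γ) - (n:ℝ) ^ (-γ)) / (-γ) := by
    rw [integral_rpow (Or.inr ⟨by intro h; nlinarith, by
      rw [Set.uIcc_of_le (by linarith [Nat.cast_nonneg (α := ℝ) a])]
      intro h
      have := (Set.mem_Icc.1 h).1
      linarith⟩)]
    norm_num
  have hfin : (((n:ℝ) + a) ^ (-γ) - (n:ℝ) ^ (-γ)) / (-γ) ≤ (n : ℝ) ^ (-γ) / γ := by
    rw [div_neg, show -(((((n:ℝ) + a) ^ (-γ) - (n:ℝ) ^ (-γ))) / γ) =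
      ((n:ℝ) ^ (-γ) - ((n:ℝ) + a) ^ (-γ)) / γ by ring]
    gcongr
    exact sub_le_self _ (Real.rpow_nonneg (by positivity) _)
  calc ∑ z ∈ W, ((z : ℝ)) ^ (-(1 + γ))
      ≤ ∑ i ∈ Finset.range a, (((n : ℤ) + 1 + i : ℤ) : ℝ) ^ (-(1 + γ)) := hstep
    _ = ∑ i ∈ Finset.range a, ((n:ℝ) + ((i + 1 : ℕ) : ℝ)) ^ (-(1 + γ)) := by
        apply Finset.sum_congr rfl; intro i _; push_cast; ring_nf
    _ ≤ ∫ x in (n:ℝ)..((n:ℝ) + a), x ^ (-(1 + γ)) := hint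
    _ = (((n:ℝ) + a) ^ (-γ) - (n:ℝ) ^ (-γ)) / (-γ) := hival
    _ ≤ (n : ℝ) ^ (-γ) / γ := hfin

lemma tail_sum_abs (γ : ℝ) (hγ : 0 < γ) (n : ℕ) (hn : 1 ≤ n) (Z : Finset ℤ)
    (hZ : ∀ z ∈ Z, (n : ℤ) < |z|) :
    ∑ z ∈ Z, |(z : ℝ)| ^ (-(1 + γ)) ≤ 2 * ((n : ℝ) ^ (-γ) / γ) := by
  rw [← Finset.sum_filter_add_sum_filter_not Z (fun z => 0 < z)]
  have hpos : ∑ z ∈ Z.filter (fun z => 0 < z), |(z : ℝ)| ^ (-(1 + γ)) ≤ (n : ℝ) ^ (-γ) / γ := by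
    rw [Finset.sum_congr rfl (fun z hz => by
      rw [abs_of_pos]
      exact_mod_cast (Finset.mem_filter.1 hz).2)]
    apply tail_sum γ hγ n hn
    intro z hz
    have h1 := hZ z (Finset.filter_subset _ _ hz)
    have h2 := (Finset.mem_filter.1 hz).2
    rw [abs_of_pos h2] at h1; exact h1
  have hneg : ∑ z ∈ Z.filter (fun z => ¬ 0 < z), |(z : ℝ)| ^ (-(1 + γ)) ≤ (n : ℝ) ^ (-γ) / γ := by
    have himg : ∑ z ∈ (Z.filter (fun z => ¬ 0 < z)).image (fun z => -z), ((z : ℝ)) ^ (-(1 + γ))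
        = ∑ z ∈ Z.filter (fun z => ¬ 0 < z), ((-z : ℤ) : ℝ) ^ (-(1 + γ)) := by
      apply Finset.sum_image
      intro i _ j _ h
      beta_reduce at h
      omega
    have heq : ∑ z ∈ Z.filter (fun z => ¬ 0 < z), |(z : ℝ)| ^ (-(1 + γ))
        = ∑ z ∈ Z.filter (fun z => ¬ 0 < z), ((-z : ℤ) : ℝ) ^ (-(1 + γ)) := by
      apply Finset.sum_congr rfl
      intro z hz
      have h2 := (Finset.mem_filter.1 hz).2
      have : |(z:ℝ)| = ((-z : ℤ) : ℝ) := by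
        push_cast
        rw [abs_of_nonpos]
        exact_mod_cast (by omega : z ≤ 0)
      rw [this]
    rw [heq, ← himg]
    apply tail_sum γ hγ n hn
    intro w hw
    obtain ⟨z, hz, rfl⟩ := Finset.mem_image.1 hw
    have h1 := hZ z (Finset.filter_subset _ _ hz)
    have h2 := (Finset.mem_filter.1 hz).2
    rw [abs_of_nonpos (by omega)] at h1; omega
  linarith

lemma sum_prod_left (ψ : ℤ → ℝ) (A : ℝ)
    (hA : ∀ Z : Finset ℤ, ∑ z ∈ Z, ψ z ≤ A) (I W : Finset ℤ) :
    ∑ p ∈ I ×ˢ W, ψ (p.1 - p.2) ≤ (I.card : ℝ) * A := by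
  rw [Finset.sum_product]
  calc ∑ x ∈ I, ∑ y ∈ W, ψ (x - y) ≤ ∑ _x ∈ I, A := by
        apply Finset.sum_le_sum
        intro x _
        calc ∑ y ∈ W, ψ (x - y)
            = ∑ z ∈ W.image (fun y : ℤ => x - y), ψ z :=
              (Finset.sum_image (by intro i _ j _ h; omega)).symm
          _ ≤ A := hA _
    _ = (I.card : ℝ) * A := by rw [Finset.sum_const, nsmul_eq_mul]

lemma sum_prod_right (ψ : ℤ → ℝ) (A : ℝ)
    (hA : ∀ Z : Finset ℤ, ∑ z ∈ Z, ψ z ≤ A) (I W : Finset ℤ) :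
    ∑ p ∈ W ×ˢ I, ψ (p.1 - p.2) ≤ (I.card : ℝ) * A := by
  rw [Finset.sum_product, Finset.sum_comm]
  calc ∑ y ∈ I, ∑ x ∈ W, ψ (x - y) ≤ ∑ _y ∈ I, A := by
        apply Finset.sum_le_sum
        intro y _
        calc ∑ x ∈ W, ψ (x - y)
            = ∑ z ∈ W.image (fun x : ℤ => x - y), ψ z :=
              (Finset.sum_image (by intro i _ j _ h; beta_reduce at h; omega)).symm
          _ ≤ A := hA _
    _ = (I.card : ℝ) * A := by rw [Finset.sum_const, nsmul_eq_mul]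

lemma transP_nonneg (cγ γ : ℝ) (hcγ : 0 ≤ cγ) (z : ℤ) : 0 ≤ transP cγ γ z := by
  unfold transP; split_ifs with h
  · exact le_refl 0
  · positivity

lemma psi_nonneg (cγ γ L M : ℝ) (hcγ : 0 ≤ cγ) (n : ℕ) (z : ℤ) :
    0 ≤ min (L ^ 2 * (z : ℝ) ^ 2 / (n : ℝ) ^ 2) (4 * M ^ 2) * transP cγ γ z := by
  apply mul_nonneg (le_min (by positivity) (by positivity)) (transP_nonneg cγ γ hcγ z)

/-- Key lemma: any finite sum of ψ is bounded. -/
lemma psi_sum_bound (γ cγ L M : ℝ) (hγ : 0 < γ) (hcγ : 0 < cγ)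
    (n : ℕ) (hn : 1 ≤ n) (Z : Finset ℤ) :
    ∑ z ∈ Z, min (L ^ 2 * (z : ℝ) ^ 2 / (n : ℝ) ^ 2) (4 * M ^ 2) * transP cγ γ z ≤
      3 * L ^ 2 * cγ * max ((n : ℝ) ^ (1 - γ)) 1 / (n : ℝ) +
        8 * M ^ 2 * cγ / γ * (n : ℝ) ^ (-γ) := by
  have hn0 : (0:ℝ) < n := by exact_mod_cast hn
  set ψ : ℤ → ℝ := fun z => min (L ^ 2 * (z : ℝ) ^ 2 / (n : ℝ) ^ 2) (4 * M ^ 2) * transP cγ γ z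
    with hψ
  rw [← Finset.sum_filter_add_sum_filter_not Z (fun z => |z| ≤ (n:ℤ))]
  have c₁def : (0:ℝ) ≤ L ^ 2 * cγ * max ((n : ℝ) ^ (1 - γ)) 1 / (n : ℝ) ^ 2 := by positivity
  have hnear : ∑ z ∈ Z.filter (fun z => |z| ≤ (n:ℤ)), ψ z ≤
      3 * L ^ 2 * cγ * max ((n : ℝ) ^ (1 - γ)) 1 / (n : ℝ) := by
    have hterm : ∀ z ∈ Z.filter (fun z => |z| ≤ (n:ℤ)),
        ψ z ≤ L ^ 2 * cγ * max ((n : ℝ) ^ (1 - γ)) 1 / (n : ℝ) ^ 2 := by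
      intro z hz
      rcases eq_or_ne z 0 with rfl | hz0
      · have h0 : transP cγ γ 0 = 0 := by rw [transP]; norm_num
        simp only [hψ, h0, mul_zero]
        exact c₁def
      · have hz1 : (1:ℝ) ≤ |(z:ℝ)| := by
          have : (1:ℤ) ≤ |z| := Int.one_le_abs hz0
          exact_mod_cast this
        have hzn : |(z:ℝ)| ≤ (n:ℝ) := by
          have := (Finset.mem_filter.1 hz).2
          exact_mod_cast this
        have habs : (0:ℝ) < |(z:ℝ)| := by linarith
        have key : (z:ℝ) ^ 2 * |(z:ℝ)| ^ (-(1 + γ)) = |(z:ℝ)| ^ (1 - γ) := by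
          rw [← sq_abs, ← Real.rpow_natCast |(z:ℝ)| 2, ← Real.rpow_add habs]
          norm_num
          congr 1
          ring
        have hmax : |(z:ℝ)| ^ (1 - γ) ≤ max ((n : ℝ) ^ (1 - γ)) 1 := by
          rcases le_or_gt 0 (1 - γ) with h | h
          · exact le_max_of_le_left (Real.rpow_le_rpow (abs_nonneg _) hzn h)
          · exact le_max_of_le_right (Real.rpow_le_one_of_one_le_of_nonpos hz1 h.le)
        calc ψ z ≤ (L ^ 2 * (z : ℝ) ^ 2 / (n : ℝ) ^ 2) * transP cγ γ z := by
              apply mul_le_mul_of_nonneg_right (min_le_left _ _) (transP_nonneg _ _ hcγ.le _)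
          _ = L ^ 2 * cγ * ((z:ℝ) ^ 2 * |(z:ℝ)| ^ (-(1 + γ))) / (n : ℝ) ^ 2 := by
              rw [transP, if_neg hz0]; ring
          _ = L ^ 2 * cγ * |(z:ℝ)| ^ (1 - γ) / (n : ℝ) ^ 2 := by rw [key]
          _ ≤ L ^ 2 * cγ * max ((n : ℝ) ^ (1 - γ)) 1 / (n : ℝ) ^ 2 := by gcongr
    have hcard : ((Z.filter (fun z => |z| ≤ (n:ℤ))).card : ℝ) ≤ 3 * n := by
      have hsub : Z.filter (fun z => |z| ≤ (n:ℤ)) ⊆ Finset.Icc (-(n:ℤ)) (n:ℤ) := by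
        intro z hz
        have h2 := abs_le.1 (Finset.mem_filter.1 hz).2
        simp only [Finset.mem_Icc]; omega
      have := Finset.card_le_card hsub
      rw [Int.card_Icc] at this
      have h2 : ((n:ℤ) + 1 - -(n:ℤ)).toNat = 2 * n + 1 := by omega
      rw [h2] at this
      have : ((Z.filter (fun z => |z| ≤ (n:ℤ))).card : ℝ) ≤ (2 * n + 1 : ℕ) := by exact_mod_cast this
      have hn1 : (1:ℝ) ≤ (n:ℕ) := by exact_mod_cast hn
      push_cast at this ⊢
      linarith
    calc ∑ z ∈ Z.filter (fun z => |z| ≤ (n:ℤ)), ψ z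
        ≤ ((Z.filter (fun z => |z| ≤ (n:ℤ))).card : ℝ) *
          (L ^ 2 * cγ * max ((n : ℝ) ^ (1 - γ)) 1 / (n : ℝ) ^ 2) := by
          rw [← nsmul_eq_mul]
          exact Finset.sum_le_card_nsmul _ _ _ hterm
      _ ≤ 3 * n * (L ^ 2 * cγ * max ((n : ℝ) ^ (1 - γ)) 1 / (n : ℝ) ^ 2) := by gcongr
      _ = 3 * L ^ 2 * cγ * max ((n : ℝ) ^ (1 - γ)) 1 / (n : ℝ) := by
          field_simp
  have hfar : ∑ z ∈ Z.filter (fun z => ¬ |z| ≤ (n:ℤ)), ψ z ≤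
      8 * M ^ 2 * cγ / γ * (n : ℝ) ^ (-γ) := by
    have hterm : ∀ z ∈ Z.filter (fun z => ¬ |z| ≤ (n:ℤ)),
        ψ z ≤ 4 * M ^ 2 * cγ * |(z:ℝ)| ^ (-(1 + γ)) := by
      intro z hz
      have hz0 : z ≠ 0 := by
        have h2 := (Finset.mem_filter.1 hz).2
        rintro rfl
        exact h2 (by simp)
      calc ψ z ≤ (4 * M ^ 2) * transP cγ γ z := by
            apply mul_le_mul_of_nonneg_right (min_le_right _ _) (transP_nonneg _ _ hcγ.le _)
        _ = 4 * M ^ 2 * cγ * |(z:ℝ)| ^ (-(1 + γ)) := by rw [transP, if_neg hz0]; ring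
    calc ∑ z ∈ Z.filter (fun z => ¬ |z| ≤ (n:ℤ)), ψ z
        ≤ ∑ z ∈ Z.filter (fun z => ¬ |z| ≤ (n:ℤ)), 4 * M ^ 2 * cγ * |(z:ℝ)| ^ (-(1 + γ)) :=
          Finset.sum_le_sum hterm
      _ = 4 * M ^ 2 * cγ * ∑ z ∈ Z.filter (fun z => ¬ |z| ≤ (n:ℤ)), |(z:ℝ)| ^ (-(1 + γ)) := by
          rw [Finset.mul_sum]
      _ ≤ 4 * M ^ 2 * cγ * (2 * ((n : ℝ) ^ (-γ) / γ)) := by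
          apply mul_le_mul_of_nonneg_left ?_ (by positivity)
          apply tail_sum_abs γ hγ n hn
          intro z hz
          have := (Finset.mem_filter.1 hz).2
          omega
      _ = 8 * M ^ 2 * cγ / γ * (n : ℝ) ^ (-γ) := by field_simp; ring
  linarith

lemma crate_bounds (m : ℕ) (x y : ℤ) (η : ℤ → ℝ)
    (hη : ∀ z : ℤ, η z = 0 ∨ η z = 1) :
    0 ≤ crate m x y η ∧ crate m x y η ≤ 2 * m + 1 := by
  have h01 : ∀ z, 0 ≤ η z ∧ η z ≤ 1 := by
    intro z; rcases hη z with h | h <;> simp [h]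
  have hprod : ∀ f : ℕ → ℤ, 0 ≤ (∏ i ∈ Finset.range (m - 1), η (f i)) ∧
      (∏ i ∈ Finset.range (m - 1), η (f i)) ≤ 1 := by
    intro f
    constructor
    · exact Finset.prod_nonneg fun i _ => (h01 (f i)).1
    · exact Finset.prod_le_one (fun i _ => (h01 (f i)).1) (fun i _ => (h01 (f i)).2)
  have hS : 0 ≤ Srate m x y η ∧ Srate m x y η ≤ 2 * m := by
    constructor
    · apply Finset.sum_nonneg
      intro j _
      have h1 := hprod (fun i => aIdx m x y (i + j))
      have h2 := hprod (fun i => aIdx m x y (i + j + 2 * (m - 1)))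
      linarith [h1.1, h2.1]
    · calc Srate m x y η ≤ ∑ _j ∈ Finset.Icc 1 m, (2:ℝ) := by
            apply Finset.sum_le_sum
            intro j _
            have h1 := hprod (fun i => aIdx m x y (i + j))
            have h2 := hprod (fun i => aIdx m x y (i + j + 2 * (m - 1)))
            linarith [h1.2, h2.2]
        _ = 2 * m := by
            rw [Finset.sum_const, nsmul_eq_mul, Nat.card_Icc]
            push_cast [Nat.add_sub_cancel]
            ring
  unfold crate
  split_ifs with h1 h2
  · subst h1; norm_num
  · constructor
    · linarith [hS.1]
    · push_cast; linarith [hS.2]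
  · constructor
    · linarith [hS.1]
    · push_cast; linarith [hS.2]

theorem stmt14 (γ cγ T : ℝ) (hγ : γ ∈ Set.Ioo (0 : ℝ) 2) (hcγ : 0 < cγ)
    (hnorm : ∑' z : ℤ, transP cγ γ z = 1) (hT : 0 < T)
    (m : ℕ) (hm : 1 ≤ m) (G : ℝ → ℝ → ℝ) (hG : IsTestFun G) :
    ∃ C : ℝ, 0 < C ∧ ∀ n : ℕ, 1 ≤ n → ∀ η : ℤ → ℝ, (∀ z : ℤ, η z = 0 ∨ η z = 1) →
      (⨆ s : Set.Icc (0 : ℝ) T,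
          ((n : ℝ) ^ γ / (4 * (n : ℝ) ^ 2)) *
            ∑' xy : ℤ × ℤ,
              (G (s : ℝ) ((xy.2 : ℝ) / n) - G (s : ℝ) ((xy.1 : ℝ) / n)) ^ 2 *
                transP cγ γ (xy.1 - xy.2) * crate m xy.1 xy.2 η *
                (η xy.1 - η xy.2) ^ 2) ≤
        C * max ((n : ℝ) ^ (γ - 2)) ((n : ℝ)⁻¹) := by
  obtain ⟨hγ0, hγ2⟩ := hγ
  obtain ⟨k, Gj, hGj, hGeq⟩ := hG
  choose Lj hLj using fun j =>
    ContDiff.lipschitzWith_of_hasCompactSupport (hGj j).2 (hGj j).1 (by simp)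
  choose Mj hMj using fun j => (hGj j).2.exists_bound_of_continuous (hGj j).1.continuous
  choose Rj hRj using fun j => ((hGj j).2.isBounded).subset_closedBall (0 : ℝ)
  set TT : ℝ := max 1 T with hTTdef
  have hTT1 : (1:ℝ) ≤ TT := le_max_left _ _
  set L : ℝ := max (∑ j ∈ Finset.range (k + 1), TT ^ j * (Lj j : ℝ)) 1 with hLdef
  set M : ℝ := max (∑ j ∈ Finset.range (k + 1), TT ^ j * Mj j) 1 with hMdef
  set R : ℝ := (∑ j ∈ Finset.range (k + 1), max (Rj j) 0) + 1 with hRdef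
  have hL1 : (1:ℝ) ≤ L := le_max_right _ _
  have hM1 : (1:ℝ) ≤ M := le_max_right _ _
  have hR1 : (1:ℝ) ≤ R := by
    have : 0 ≤ ∑ j ∈ Finset.range (k + 1), max (Rj j) 0 :=
      Finset.sum_nonneg fun j _ => le_max_right _ _
    simp only [hRdef]; linarith
  have hMj0 : ∀ j, 0 ≤ Mj j := fun j => le_trans (norm_nonneg _) (hMj j 0)
  -- vanishing outside [-R, R]
  have hGzero : ∀ s u : ℝ, R < |u| → G s u = 0 := by
    intro s u hu
    rw [hGeq]
    apply Finset.sum_eq_zero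
    intro j hj
    have hnot : u ∉ tsupport (Gj j) := by
      intro hmem
      have h1 := hRj j hmem
      rw [Metric.mem_closedBall, Real.dist_eq, sub_zero] at h1
      have h2 : Rj j ≤ R := by
        have h3 : max (Rj j) 0 ≤ ∑ j ∈ Finset.range (k + 1), max (Rj j) 0 :=
          Finset.single_le_sum (f := fun j => max (Rj j) 0)
            (fun i _ => le_max_right _ _) (Finset.mem_range.2 (Nat.lt_succ_of_le (Nat.le_of_lt_succ (Finset.mem_range.1 hj))))
        have h4 : Rj j ≤ max (Rj j) 0 := le_max_left _ _
        simp only [hRdef]; linarith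
      linarith
    rw [image_eq_zero_of_notMem_tsupport hnot, mul_zero]
  -- uniform bound
  have hsTT : ∀ s : ℝ, s ∈ Set.Icc (0:ℝ) T → ∀ j : ℕ, |s ^ j| ≤ TT ^ j := by
    intro s hs j
    rw [abs_pow]
    apply pow_le_pow_left₀ (abs_nonneg s)
    rw [abs_of_nonneg hs.1]
    exact le_trans hs.2 (le_max_right _ _)
  have hGbdd : ∀ s : ℝ, s ∈ Set.Icc (0:ℝ) T → ∀ u : ℝ, |G s u| ≤ M := by
    intro s hs u
    rw [hGeq]
    calc |∑ j ∈ Finset.range (k + 1), s ^ j * Gj j u|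
        ≤ ∑ j ∈ Finset.range (k + 1), |s ^ j * Gj j u| := Finset.abs_sum_le_sum_abs _ _
      _ ≤ ∑ j ∈ Finset.range (k + 1), TT ^ j * Mj j := by
          apply Finset.sum_le_sum
          intro j _
          rw [abs_mul]
          exact mul_le_mul (hsTT s hs j) (hMj j u) (abs_nonneg _)
            (le_trans (abs_nonneg _) (hsTT s hs j))
      _ ≤ M := le_max_left _ _
  -- Lipschitz
  have hGlip : ∀ s : ℝ, s ∈ Set.Icc (0:ℝ) T → ∀ u v : ℝ, |G s u - G s v| ≤ L * |u - v| := by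
    intro s hs u v
    rw [hGeq, hGeq, ← Finset.sum_sub_distrib]
    calc |∑ j ∈ Finset.range (k + 1), (s ^ j * Gj j u - s ^ j * Gj j v)|
        ≤ ∑ j ∈ Finset.range (k + 1), |s ^ j * Gj j u - s ^ j * Gj j v| :=
          Finset.abs_sum_le_sum_abs _ _
      _ ≤ ∑ j ∈ Finset.range (k + 1), TT ^ j * (Lj j : ℝ) * |u - v| := by
          apply Finset.sum_le_sum
          intro j _
          rw [← mul_sub, abs_mul]
          have hlip : |Gj j u - Gj j v| ≤ (Lj j : ℝ) * |u - v| := by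
            have := (hLj j).dist_le_mul u v
            rwa [Real.dist_eq, Real.dist_eq] at this
          calc |s ^ j| * |Gj j u - Gj j v| ≤ TT ^ j * ((Lj j : ℝ) * |u - v|) :=
                mul_le_mul (hsTT s hs j) hlip (abs_nonneg _)
                  (le_trans (abs_nonneg _) (hsTT s hs j))
            _ = TT ^ j * (Lj j : ℝ) * |u - v| := by ring
      _ = (∑ j ∈ Finset.range (k + 1), TT ^ j * (Lj j : ℝ)) * |u - v| := by
          rw [Finset.sum_mul]
      _ ≤ L * |u - v| := by
          apply mul_le_mul_of_nonneg_right (le_max_left _ _) (abs_nonneg _)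
  -- the constant
  set P : ℝ := (2 * (m:ℝ) + 1) * (2 * R + 3) with hPdef
  have hm1 : (1:ℝ) ≤ (m:ℝ) := by exact_mod_cast hm
  have hL0 : (0:ℝ) < L := lt_of_lt_of_le one_pos hL1
  have hM0 : (0:ℝ) < M := lt_of_lt_of_le one_pos hM1
  have hR0 : (0:ℝ) < R := lt_of_lt_of_le one_pos hR1
  have hP : 0 < P := by simp only [hPdef]; nlinarith
  set C : ℝ := (P / 2) * (3 * L ^ 2 * cγ + 8 * M ^ 2 * cγ / γ) with hCdef
  have hC : 0 < C := by
    simp only [hCdef]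
    have h1 : 0 < 3 * L ^ 2 * cγ := by positivity
    have h2 : 0 < 8 * M ^ 2 * cγ / γ := by positivity
    positivity
  refine ⟨C, hC, ?_⟩
  intro n hn η hη
  have hb0 : (0:ℝ) < (n:ℝ) := by exact_mod_cast hn
  have hb1 : (1:ℝ) ≤ (n:ℝ) := by exact_mod_cast hn
  set b : ℝ := (n:ℝ) with hbdef
  -- the ψ function and its summation bound
  set A : ℝ := 3 * L ^ 2 * cγ * max (b ^ (1 - γ)) 1 / b + 8 * M ^ 2 * cγ / γ * b ^ (-γ)
    with hAdef
  set ψ : ℤ → ℝ := fun z => min (L ^ 2 * (z : ℝ) ^ 2 / b ^ 2) (4 * M ^ 2) * transP cγ γ z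
    with hψdef
  have hψ0 : ∀ z, 0 ≤ ψ z := fun z => psi_nonneg cγ γ L M hcγ.le n z
  have hA : ∀ Z : Finset ℤ, ∑ z ∈ Z, ψ z ≤ A :=
    fun Z => psi_sum_bound γ cγ L M hγ0 hcγ n hn Z
  have hA0 : 0 ≤ A := by simpa using hA ∅
  -- the index window
  set I : Finset ℤ := Finset.Icc (-⌈R * b⌉) ⌈R * b⌉ with hIdef
  have hceil0 : (0:ℤ) ≤ ⌈R * b⌉ := Int.ceil_nonneg (by nlinarith)
  have hmemI : ∀ x : ℤ, |(x:ℝ)| ≤ R * b → x ∈ I := by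
    intro x hx
    obtain ⟨h1, h2⟩ := abs_le.1 hx
    simp only [hIdef, Finset.mem_Icc]
    constructor
    · have : (-⌈R * b⌉ : ℝ) ≤ (x:ℝ) := le_trans (by simpa using neg_le_neg (Int.le_ceil (R*b))) h1
      exact_mod_cast this
    · have : (x:ℝ) ≤ (⌈R * b⌉ : ℝ) := le_trans h2 (Int.le_ceil _)
      exact_mod_cast this
  have hcardI : (I.card : ℝ) ≤ 2 * R * b + 3 := by
    simp only [hIdef]
    rw [Int.card_Icc]
    have h2 : (⌈R * b⌉ + 1 - -⌈R * b⌉) = 2 * ⌈R * b⌉ + 1 := by ring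
    rw [h2]
    have h4 : (⌈R * b⌉ : ℝ) < R * b + 1 := Int.ceil_lt_add_one _
    have h5 : ((2 * ⌈R * b⌉ + 1).toNat : ℝ) = 2 * (⌈R * b⌉:ℝ) + 1 := by
      rw [show ((2 * ⌈R * b⌉ + 1).toNat : ℝ) = (((2 * ⌈R * b⌉ + 1).toNat : ℤ) : ℝ) by push_cast; ring,
        Int.toNat_of_nonneg (by omega)]
      push_cast; ring
    rw [h5]
    linarith
  -- bound for the indicator
  set χ : ℤ → ℝ := fun x => if |(x:ℝ)| ≤ R * b then 1 else 0 with hχdef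
  have hχ01 : ∀ x, 0 ≤ χ x ∧ χ x ≤ 1 := by
    intro x; simp only [hχdef]; split_ifs <;> norm_num
  -- supremum
  haveI : Nonempty (Set.Icc (0:ℝ) T) := ⟨⟨0, Set.mem_Icc.2 ⟨le_refl 0, hT.le⟩⟩⟩
  apply ciSup_le
  rintro ⟨s, hs⟩
  -- per-pair bound
  have hpair : ∀ x y : ℤ,
      (G s ((y:ℝ)/b) - G s ((x:ℝ)/b))^2 * transP cγ γ (x - y) * crate m x y η *
        (η x - η y)^2 ≤ (2*(m:ℝ)+1) * (ψ (x - y) * (χ x + χ y)) := by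
    intro x y
    have hcr := crate_bounds m x y η hη
    have he2 : (η x - η y)^2 ≤ 1 := by
      rcases hη x with h1|h1 <;> rcases hη y with h2|h2 <;> rw [h1,h2] <;> norm_num
    have he0 : 0 ≤ (η x - η y)^2 := sq_nonneg _
    have hψχ0 : 0 ≤ ψ (x - y) * (χ x + χ y) :=
      mul_nonneg (hψ0 _) (by linarith [(hχ01 x).1, (hχ01 y).1])
    have hd2 : (G s ((y:ℝ)/b) - G s ((x:ℝ)/b))^2 * transP cγ γ (x - y) ≤
        ψ (x - y) * (χ x + χ y) := by
      by_cases hcase : |(x:ℝ)| ≤ R * b ∨ |(y:ℝ)| ≤ R * b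
      · have hχ1 : 1 ≤ χ x + χ y := by
          rcases hcase with h|h
          · have hx1 : χ x = 1 := by simp only [hχdef]; rw [if_pos h]
            linarith [(hχ01 y).1]
          · have hy1 : χ y = 1 := by simp only [hχdef]; rw [if_pos h]
            linarith [(hχ01 x).1]
        have hmin : (G s ((y:ℝ)/b) - G s ((x:ℝ)/b))^2 ≤
            min (L^2 * (((x - y : ℤ)):ℝ)^2 / b^2) (4*M^2) := by
          apply le_min
          · have h1 := hGlip s hs ((y:ℝ)/b) ((x:ℝ)/b)
            have h2 : (G s ((y:ℝ)/b) - G s ((x:ℝ)/b))^2 ≤ (L * |(y:ℝ)/b - (x:ℝ)/b|)^2 := by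
              rw [← sq_abs]
              exact pow_le_pow_left₀ (abs_nonneg _) h1 2
            refine h2.trans (le_of_eq ?_)
            rw [mul_pow, sq_abs]
            push_cast
            field_simp
            ring
          · have h1 := hGbdd s hs ((y:ℝ)/b)
            have h2 := hGbdd s hs ((x:ℝ)/b)
            have h3 : |G s ((y:ℝ)/b) - G s ((x:ℝ)/b)| ≤ 2*M := by
              calc |G s ((y:ℝ)/b) - G s ((x:ℝ)/b)|
                  ≤ |G s ((y:ℝ)/b)| + |G s ((x:ℝ)/b)| := abs_sub _ _
                _ ≤ 2*M := by linarith
            calc (G s ((y:ℝ)/b) - G s ((x:ℝ)/b))^2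
                = |G s ((y:ℝ)/b) - G s ((x:ℝ)/b)|^2 := (sq_abs _).symm
              _ ≤ (2*M)^2 := pow_le_pow_left₀ (abs_nonneg _) h3 2
              _ = 4*M^2 := by ring
        calc (G s ((y:ℝ)/b) - G s ((x:ℝ)/b))^2 * transP cγ γ (x - y)
            ≤ min (L^2 * (((x - y : ℤ)):ℝ)^2 / b^2) (4*M^2) * transP cγ γ (x - y) :=
              mul_le_mul_of_nonneg_right hmin (transP_nonneg cγ γ hcγ.le _)
          _ = ψ (x - y) * 1 := by rw [hψdef, mul_one]
          _ ≤ ψ (x - y) * (χ x + χ y) := mul_le_mul_of_nonneg_left hχ1 (hψ0 _)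
      · push_neg at hcase
        obtain ⟨h1, h2⟩ := hcase
        have hx0 : G s ((x:ℝ)/b) = 0 := by
          apply hGzero
          rw [abs_div, abs_of_pos hb0, lt_div_iff₀ hb0]
          linarith
        have hy0 : G s ((y:ℝ)/b) = 0 := by
          apply hGzero
          rw [abs_div, abs_of_pos hb0, lt_div_iff₀ hb0]
          linarith
        rw [hx0, hy0]
        norm_num
        exact hψχ0
    calc (G s ((y:ℝ)/b) - G s ((x:ℝ)/b))^2 * transP cγ γ (x - y) * crate m x y η *
          (η x - η y)^2
        = ((G s ((y:ℝ)/b) - G s ((x:ℝ)/b))^2 * transP cγ γ (x - y)) *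
            (crate m x y η * (η x - η y)^2) := by ring
      _ ≤ (ψ (x - y) * (χ x + χ y)) * (2*(m:ℝ)+1) := by
          apply mul_le_mul hd2 ?_ (mul_nonneg hcr.1 he0) hψχ0
          calc crate m x y η * (η x - η y)^2 ≤ crate m x y η * 1 :=
                mul_le_mul_of_nonneg_left he2 hcr.1
            _ = crate m x y η := mul_one _
            _ ≤ 2*(m:ℝ)+1 := hcr.2
      _ = (2*(m:ℝ)+1) * (ψ (x - y) * (χ x + χ y)) := by ring
  -- finite sums
  have h2PbA : (0:ℝ) ≤ 2 * P * b * A := by positivity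
  have hsum : ∀ U : Finset (ℤ × ℤ),
      ∑ xy ∈ U, (G s ((xy.2:ℝ)/b) - G s ((xy.1:ℝ)/b))^2 * transP cγ γ (xy.1 - xy.2) *
        crate m xy.1 xy.2 η * (η xy.1 - η xy.2)^2 ≤ 2 * P * b * A := by
    intro U
    have hleft : ∑ xy ∈ U, ψ (xy.1 - xy.2) * χ xy.1 ≤ (I.card : ℝ) * A := by
      have e1 : ∑ xy ∈ U.filter (fun p : ℤ × ℤ => p.1 ∈ I), ψ (xy.1 - xy.2) * χ xy.1
          = ∑ xy ∈ U, ψ (xy.1 - xy.2) * χ xy.1 := by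
        apply Finset.sum_subset (Finset.filter_subset _ _)
        intro p hp hnp
        have hpI : p.1 ∉ I := by
          intro hmem
          exact hnp (Finset.mem_filter.2 ⟨hp, hmem⟩)
        have : χ p.1 = 0 := by
          simp only [hχdef]
          rw [if_neg]
          intro habs
          exact hpI (hmemI p.1 habs)
        rw [this, mul_zero]
      rw [← e1]
      calc ∑ xy ∈ U.filter (fun p : ℤ × ℤ => p.1 ∈ I), ψ (xy.1 - xy.2) * χ xy.1
          ≤ ∑ xy ∈ U.filter (fun p : ℤ × ℤ => p.1 ∈ I), ψ (xy.1 - xy.2) :=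
            Finset.sum_le_sum fun p _ => mul_le_of_le_one_right (hψ0 _) (hχ01 _).2
        _ ≤ ∑ xy ∈ I ×ˢ U.image Prod.snd, ψ (xy.1 - xy.2) := by
            apply Finset.sum_le_sum_of_subset_of_nonneg
            · intro p hp
              rw [Finset.mem_product]
              exact ⟨(Finset.mem_filter.1 hp).2,
                Finset.mem_image_of_mem Prod.snd (Finset.mem_filter.1 hp).1⟩
            · intro p _ _; exact hψ0 _
        _ ≤ (I.card : ℝ) * A := sum_prod_left ψ A hA I _
    have hright : ∑ xy ∈ U, ψ (xy.1 - xy.2) * χ xy.2 ≤ (I.card : ℝ) * A := by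
      have e1 : ∑ xy ∈ U.filter (fun p : ℤ × ℤ => p.2 ∈ I), ψ (xy.1 - xy.2) * χ xy.2
          = ∑ xy ∈ U, ψ (xy.1 - xy.2) * χ xy.2 := by
        apply Finset.sum_subset (Finset.filter_subset _ _)
        intro p hp hnp
        have hpI : p.2 ∉ I := by
          intro hmem
          exact hnp (Finset.mem_filter.2 ⟨hp, hmem⟩)
        have : χ p.2 = 0 := by
          simp only [hχdef]
          rw [if_neg]
          intro habs
          exact hpI (hmemI p.2 habs)
        rw [this, mul_zero]
      rw [← e1]
      calc ∑ xy ∈ U.filter (fun p : ℤ × ℤ => p.2 ∈ I), ψ (xy.1 - xy.2) * χ xy.2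
          ≤ ∑ xy ∈ U.filter (fun p : ℤ × ℤ => p.2 ∈ I), ψ (xy.1 - xy.2) :=
            Finset.sum_le_sum fun p _ => mul_le_of_le_one_right (hψ0 _) (hχ01 _).2
        _ ≤ ∑ xy ∈ (U.image Prod.fst) ×ˢ I, ψ (xy.1 - xy.2) := by
            apply Finset.sum_le_sum_of_subset_of_nonneg
            · intro p hp
              rw [Finset.mem_product]
              exact ⟨Finset.mem_image_of_mem Prod.fst (Finset.mem_filter.1 hp).1,
                (Finset.mem_filter.1 hp).2⟩
            · intro p _ _; exact hψ0 _
        _ ≤ (I.card : ℝ) * A := sum_prod_right ψ A hA I _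
    calc ∑ xy ∈ U, (G s ((xy.2:ℝ)/b) - G s ((xy.1:ℝ)/b))^2 * transP cγ γ (xy.1 - xy.2) *
          crate m xy.1 xy.2 η * (η xy.1 - η xy.2)^2
        ≤ ∑ xy ∈ U, (2*(m:ℝ)+1) * (ψ (xy.1 - xy.2) * (χ xy.1 + χ xy.2)) :=
          Finset.sum_le_sum fun xy _ => hpair xy.1 xy.2
      _ = (2*(m:ℝ)+1) * (∑ xy ∈ U, ψ (xy.1 - xy.2) * χ xy.1 +
            ∑ xy ∈ U, ψ (xy.1 - xy.2) * χ xy.2) := by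
          rw [← Finset.sum_add_distrib, Finset.mul_sum]
          apply Finset.sum_congr rfl
          intros; ring
      _ ≤ (2*(m:ℝ)+1) * ((I.card : ℝ) * A + (I.card : ℝ) * A) := by
          apply mul_le_mul_of_nonneg_left (by linarith) (by linarith)
      _ ≤ (2*(m:ℝ)+1) * ((2*R*b+3) * A + (2*R*b+3) * A) := by
          apply mul_le_mul_of_nonneg_left ?_ (by linarith)
          have := mul_le_mul_of_nonneg_right hcardI hA0
          linarith
      _ ≤ 2 * P * b * A := by
          simp only [hPdef]
          have h3b : 2*R*b+3 ≤ (2*R+3)*b := by nlinarith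
          have h4 := mul_le_mul_of_nonneg_right h3b hA0
          nlinarith
  -- conclude
  have hpref : (0:ℝ) ≤ b ^ γ / (4 * b ^ 2) := by positivity
  have htsum := tsum_le_of_sum_le' (L := SummationFilter.unconditional _) h2PbA hsum
  refine le_trans (mul_le_mul_of_nonneg_left htsum hpref) ?_
  have hbne : b ≠ 0 := hb0.ne'
  have hkey : b ^ γ / (4 * b ^ 2) * (2*P*b*A) = (P/2) * (b ^ (γ-1) * A) := by
    have hpow1 : b ^ γ * b = b ^ (γ+1) := (Real.rpow_add_one hbne γ).symm
    have hpow2 : b ^ (2:ℕ) = b ^ (2:ℝ) := by rw [← Real.rpow_natCast b 2]; norm_num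
    have h : b ^ γ * b / b ^ (2:ℕ) = b ^ (γ-1) := by
      rw [hpow1, hpow2, ← Real.rpow_sub hb0]
      norm_num
      congr 1
      ring
    rw [show b ^ γ / (4*b^2) * (2*P*b*A) = (P/2) * ((b^γ * b / b^(2:ℕ)) * A) by
      field_simp; ring, h]
  have hii : b ^ (γ-1) * b ^ (-γ) = b⁻¹ := by
    rw [← Real.rpow_add hb0, show γ-1+-γ = -1 by ring, Real.rpow_neg_one]
  have hi : b ^ (γ-1) * (max (b^(1-γ)) 1 / b) ≤ max (b^(γ-2)) b⁻¹ := by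
    rcases max_cases (b^(1-γ)) (1:ℝ) with ⟨heq, _⟩ | ⟨heq, _⟩
    · rw [heq]
      have h1 : b^(γ-1) * b^(1-γ) = 1 := by
        rw [← Real.rpow_add hb0, show γ-1+(1-γ) = 0 by ring, Real.rpow_zero]
      calc b^(γ-1) * (b^(1-γ)/b) = (b^(γ-1) * b^(1-γ))/b := by ring
        _ = 1/b := by rw [h1]
        _ = b⁻¹ := one_div b
        _ ≤ max (b^(γ-2)) b⁻¹ := le_max_right _ _
    · rw [heq]
      have h1 : b^(γ-2) = b^(γ-1)/b := by
        rw [show γ-2 = (γ-1)-1 by ring, Real.rpow_sub hb0, Real.rpow_one]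
      calc b^(γ-1) * (1/b) = b^(γ-1)/b := by ring
        _ = b^(γ-2) := h1.symm
        _ ≤ max (b^(γ-2)) b⁻¹ := le_max_left _ _
  have hmax0 : (0:ℝ) ≤ max (b^(γ-2)) b⁻¹ :=
    le_trans (inv_nonneg.2 hb0.le) (le_max_right _ _)
  have hA2 : b^(γ-1) * A ≤ (3*L^2*cγ + 8*M^2*cγ/γ) * max (b^(γ-2)) b⁻¹ := by
    simp only [hAdef]
    have t1 : b^(γ-1) * (3*L^2*cγ * max (b^(1-γ)) 1 / b) ≤ 3*L^2*cγ * max (b^(γ-2)) b⁻¹ := by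
      have ht := mul_le_mul_of_nonneg_left hi (by positivity : (0:ℝ) ≤ 3*L^2*cγ)
      calc b^(γ-1) * (3*L^2*cγ * max (b^(1-γ)) 1 / b)
          = 3*L^2*cγ * (b^(γ-1) * (max (b^(1-γ)) 1 / b)) := by ring
        _ ≤ 3*L^2*cγ * max (b^(γ-2)) b⁻¹ := ht
    have t2 : b^(γ-1) * (8*M^2*cγ/γ * b^(-γ)) ≤ 8*M^2*cγ/γ * max (b^(γ-2)) b⁻¹ := by
      have e : b^(γ-1) * (8*M^2*cγ/γ * b^(-γ)) = 8*M^2*cγ/γ * b⁻¹ := by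
        rw [show b^(γ-1) * (8*M^2*cγ/γ * b^(-γ)) = 8*M^2*cγ/γ * (b^(γ-1)*b^(-γ)) by ring, hii]
      rw [e]
      exact mul_le_mul_of_nonneg_left (le_max_right _ _) (by positivity)
    calc b^(γ-1) * (3*L^2*cγ * max (b^(1-γ)) 1 / b + 8*M^2*cγ/γ * b^(-γ))
        = b^(γ-1) * (3*L^2*cγ * max (b^(1-γ)) 1 / b) +
            b^(γ-1) * (8*M^2*cγ/γ * b^(-γ)) := by ring
      _ ≤ 3*L^2*cγ * max (b^(γ-2)) b⁻¹ + 8*M^2*cγ/γ * max (b^(γ-2)) b⁻¹ := add_le_add t1 t2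
      _ = (3*L^2*cγ + 8*M^2*cγ/γ) * max (b^(γ-2)) b⁻¹ := by ring
  rw [hkey]
  calc (P/2) * (b^(γ-1) * A)
      ≤ (P/2) * ((3*L^2*cγ + 8*M^2*cγ/γ) * max (b^(γ-2)) b⁻¹) :=
        mul_le_mul_of_nonneg_left hA2 (by positivity)
    _ = C * max (b^(γ-2)) b⁻¹ := by rw [hCdef]; ring
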